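/- arXiv:1503.04360 — 4 statements merged into one kernel-verified Lean document; each statement's English description precedes it below -/
import Mathlib

section
/- Fix λ > 0 and γ > 0, and define T(A) = g(A)/(g(A)^2 + λ) with g(A) = A/(A^2+γ). If A₁ > 0 and A₂ > 0 are both fixed points of T (i.e., T(A₁) = A₁ and T(A₂) = A₂), then A₁ = A₂. That is, T has at most one strictly positive fixed point. -/
/-! Clearing denominators, `A > 0` is a fixed point of `T` exactly when `l (A² + γ)² = γ`,
and the left-hand side is strictly increasing in `A ≥ 0`. -/

open Set

lemma div_sq_add_div_eq_self_iff {l γ A : ℝ} (hl : 0 ≤ l) (hγ : 0 < γ) (hA : 0 < A) :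
    A / (A ^ 2 + γ) / ((A / (A ^ 2 + γ)) ^ 2 + l) = A ↔ l * (A ^ 2 + γ) ^ 2 = γ := by
  have hd : A ^ 2 + γ ≠ 0 := by positivity
  have hd' : (A / (A ^ 2 + γ)) ^ 2 + l ≠ 0 := by positivity
  rw [div_eq_iff hd', div_pow, div_add' _ _ _ (pow_ne_zero 2 hd), mul_div_assoc', div_eq_div_iff hd
    (pow_ne_zero 2 hd)]
  constructor <;> intro h
  · have : A * (l * (A ^ 2 + γ) ^ 2 - γ) * (A ^ 2 + γ) = 0 := by linear_combination -h
    simpa [hA.ne', hd, sub_eq_zero] using this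
  · linear_combination (-A * (A ^ 2 + γ)) * h

lemma strictMonoOn_mul_sq_add_sq {l γ : ℝ} (hl : 0 < l) (hγ : 0 ≤ γ) :
    StrictMonoOn (fun A : ℝ => l * (A ^ 2 + γ) ^ 2) (Ici 0) := by
  intro a ha b _ hab
  show l * (a ^ 2 + γ) ^ 2 < l * (b ^ 2 + γ) ^ 2
  gcongr

theorem stmt_5 (l γ : ℝ) (hl : 0 < l) (hγ : 0 < γ)
    (g T : ℝ → ℝ) (hg : ∀ A, g A = A / (A ^ 2 + γ))
    (hT : ∀ A, T A = g A / ((g A) ^ 2 + l))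
    (A₁ A₂ : ℝ) (h₁ : 0 < A₁) (h₂ : 0 < A₂)
    (hf₁ : T A₁ = A₁) (hf₂ : T A₂ = A₂) :
    A₁ = A₂ := by
  have key : ∀ A, 0 < A → T A = A → l * (A ^ 2 + γ) ^ 2 = γ := fun A hA hf =>
    (div_sq_add_div_eq_self_iff hl.le hγ hA).1 (by rwa [hT, hg] at hf)
  exact (strictMonoOn_mul_sq_add_sq hl hγ.le).injOn h₁.le h₂.le
    ((key A₁ h₁ hf₁).trans (key A₂ h₂ hf₂).symm)
end

section
/- Let λ > 0, σ_m² > 0, σ_w² > 0, and suppose A ≠ 0 satisfies the fixed point equations A = 1/(K + λ/K) and K = A σ_m² / (A² σ_m² + σ_w²) for some K ≠ 0. Then K² = sqrt(λ σ_m² / σ_w²) − λ, and in particular a real nonzero solution exists only if λ < σ_m²/σ_w². -/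
/-! Substituting the encoder gain `A = K / (K² + λ)` into the decoder equation and cancelling `K`
leaves `σ_w² (K² + λ)² = λ σ_m²`, whose positive root in `K² + λ` is `√(λ σ_m² / σ_w²)`;
`K² > 0` then forces `λ² σ_w² < λ σ_m²`. -/

lemma one_div_add_div_self {𝕜 : Type*} [Field 𝕜] (K l : 𝕜) :
    1 / (K + l / K) = K / (K ^ 2 + l) := by
  rcases eq_or_ne K 0 with rfl | hK
  · simp
  · rw [add_div' _ _ _ hK, one_div_div, sq]

lemma mul_sq_add_eq_of_fixedPoint {𝕜 : Type*} [Field 𝕜] {l σm2 σw2 A K : 𝕜} (hK : K ≠ 0)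
    (hKl : K ^ 2 + l ≠ 0) (hden : A ^ 2 * σm2 + σw2 ≠ 0)
    (hA : A = K / (K ^ 2 + l)) (h2 : K = A * σm2 / (A ^ 2 * σm2 + σw2)) :
    σw2 * (K ^ 2 + l) ^ 2 = l * σm2 := by
  rw [eq_div_iff hden, hA] at h2
  field_simp at h2
  linear_combination h2

theorem stmt_6_general (l σm2 σw2 A K : ℝ) (hl : 0 < l) (hm : 0 < σm2) (hw : 0 < σw2)
    (hK : K ≠ 0)
    (h1 : A = 1 / (K + l / K))
    (h2 : K = A * σm2 / (A ^ 2 * σm2 + σw2)) :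
    K ^ 2 = Real.sqrt (l * σm2 / σw2) - l ∧ l < σm2 / σw2 := by
  have hKl : 0 < K ^ 2 + l := by positivity
  have key : σw2 * (K ^ 2 + l) ^ 2 = l * σm2 :=
    mul_sq_add_eq_of_fixedPoint hK hKl.ne' (by positivity) (h1.trans (one_div_add_div_self K l)) h2
  have hsqrt : Real.sqrt (l * σm2 / σw2) = K ^ 2 + l := by
    rw [← key, mul_div_cancel_left₀ _ hw.ne', Real.sqrt_sq hKl.le]
  refine ⟨by rw [hsqrt]; ring, ?_⟩
  have hK2 : 0 < K ^ 2 := by positivity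
  have hlt : σw2 * l ^ 2 < l * σm2 := key ▸ by gcongr; linarith
  rw [lt_div_iff₀ hw]
  nlinarith

theorem stmt_6 (l σm2 σw2 A K : ℝ) (hl : 0 < l) (hm : 0 < σm2) (hw : 0 < σw2)
    (hA : A ≠ 0) (hK : K ≠ 0)
    (h1 : A = 1 / (K + l / K))
    (h2 : K = A * σm2 / (A ^ 2 * σm2 + σw2)) :
    K ^ 2 = Real.sqrt (l * σm2 / σw2) - l ∧ l < σm2 / σw2 :=
  stmt_6_general l σm2 σw2 A K hl hm hw hK h1 h2
end

section
/- Let σ_m², σ_w² > 0, b ∈ ℝ. Define the informative game cost g_i = 3√(λσ_m²σ_w²) + b²√(σ_m²/(λσ_w²)) − λσ_w², non-informative game cost g_u = 2σ_m² + b², informative team cost t_i = 2√(2λσ_m²σ_w²) + b²/2 − λσ_w², and non-informative team cost t_u = 2σ_m² + b²/2. Then for 0 < λ < σ_m²/σ_w², t_i < g_i, and for all λ > 0 and b ≠ 0 (or in general), t_u < g_u whenever b ≠ 0 and t_u ≤ g_u always. Consequently, with J*,g = min{g_i, g_u} when λ < σ_m²/σ_w² and J*,g = g_u otherwise, and J*,t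 = min{t_i, t_u} when λ < 2σ_m²/σ_w² and J*,t = t_u otherwise, it holds that J*,t ≤ J*,g, with strict inequality when b ≠ 0. -/
/-!
Write `s = √(λσ_m²σ_w²)`. In the informative regime the team pays `2√2·s + b²/2 - λσ_w²`
against the game's `3s + b²√(σ_m²/(λσ_w²)) - λσ_w²`; since `2√2 < 3` and `λ < σ_m²/σ_w²`
makes the square root multiplying `b²` at least `1`, the team cost is strictly smaller.
In the non-informative regime the costs differ by `b²/2 ≥ 0`. The game's informative
threshold `σ_m²/σ_w²` lies below the team's `2σ_m²/σ_w²`, so wherever the game may choose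
between both regimes the team may as well, and comparing the minima regime by regime
gives `J*,t ≤ J*,g`, strictly when `b ≠ 0`.
-/

theorem two_mul_sqrt_two_mul_lt {x : ℝ} (hx : 0 < x) : 2 * √(2 * x) < 3 * √x := by
  have hsx : 0 < √x := Real.sqrt_pos.mpr hx
  rw [Real.sqrt_mul zero_le_two]
  nlinarith [Real.sqrt_two_lt_three_halves]

theorem teamInformative_lt_gameInformative {σm2 σw2 l : ℝ} (b : ℝ) (hm : 0 < σm2)
    (hw : 0 < σw2) (hl : 0 < l) (h : l < σm2 / σw2) :
    2 * √(2 * l * σm2 * σw2) + b ^ 2 / 2 - l * σw2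
      < 3 * √(l * σm2 * σw2) + b ^ 2 * √(σm2 / (l * σw2)) - l * σw2 := by
  have hsqrt : 2 * √(2 * (l * σm2 * σw2)) < 3 * √(l * σm2 * σw2) :=
    two_mul_sqrt_two_mul_lt (by positivity)
  have hratio : 1 ≤ √(σm2 / (l * σw2)) :=
    Real.one_le_sqrt.mpr ((one_le_div (by positivity)).mpr ((lt_div_iff₀ hw).mp h).le)
  rw [show 2 * l * σm2 * σw2 = 2 * (l * σm2 * σw2) by ring]
  nlinarith [sq_nonneg b]

section RegimeMinimum

variable {α : Type*} [LinearOrder α] {p q : Prop} [Decidable p] [Decidable q] {a b c d : α}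

theorem ite_min_le_ite_min (hpq : p → q) (hca : p → c ≤ a) (hdb : d ≤ b) :
    (if q then min c d else d) ≤ (if p then min a b else b) := by
  split_ifs with hq hp hp
  · exact min_le_min (hca hp) hdb
  · exact (min_le_right c d).trans hdb
  · exact absurd (hpq hp) hq
  · exact hdb

theorem ite_min_lt_ite_min (hpq : p → q) (hca : p → c < a) (hdb : d < b) :
    (if q then min c d else d) < (if p then min a b else b) := by
  split_ifs with hq hp hp
  · exact min_lt_min (hca hp) hdb
  · exact (min_le_right c d).trans_lt hdb
  · exact absurd (hpq hp) hq
  · exact hdb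

end RegimeMinimum

theorem stmt_10 (σm2 σw2 l b : ℝ) (hm : 0 < σm2) (hw : 0 < σw2) (hl : 0 < l)
    (gi gu ti tu Jg Jt : ℝ)
    (hgi : gi = 3 * Real.sqrt (l * σm2 * σw2)
      + b ^ 2 * Real.sqrt (σm2 / (l * σw2)) - l * σw2)
    (hgu : gu = 2 * σm2 + b ^ 2)
    (hti : ti = 2 * Real.sqrt (2 * l * σm2 * σw2) + b ^ 2 / 2 - l * σw2)
    (htu : tu = 2 * σm2 + b ^ 2 / 2)
    (hJg : Jg = if l < σm2 / σw2 then min gi gu else gu)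
    (hJt : Jt = if l < 2 * σm2 / σw2 then min ti tu else tu) :
    (l < σm2 / σw2 → ti < gi) ∧ (b ≠ 0 → tu < gu) ∧ tu ≤ gu ∧
    Jt ≤ Jg ∧ (b ≠ 0 → Jt < Jg) := by
  subst hgi hgu hti htu hJg hJt
  have informative : l < σm2 / σw2 → _ := teamInformative_lt_gameInformative b hm hw hl
  have uninformative_le : 2 * σm2 + b ^ 2 / 2 ≤ 2 * σm2 + b ^ 2 := by linarith [sq_nonneg b]
  have uninformative_lt (hb : b ≠ 0) : 2 * σm2 + b ^ 2 / 2 < 2 * σm2 + b ^ 2 := by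
    linarith [sq_pos_of_ne_zero hb]
  have thresholds : l < σm2 / σw2 → l < 2 * σm2 / σw2 := fun h =>
    h.trans (div_lt_div_of_pos_right (by linarith) hw)
  exact ⟨informative, uninformative_lt, uninformative_le,
    ite_min_le_ite_min thresholds (fun h => (informative h).le) uninformative_le,
    fun hb => ite_min_lt_ite_min thresholds informative (uninformative_lt hb)⟩
end

section
/- In the Stackelberg scalar Gaussian signaling game with linear encoder x = Am + C, the encoder cost equals J(A,C) = σ_m²σ_w²/(A²σ_m² + σ_w²) + b² + λA²σ_m² + λC². This is minimized at C* = 0 and, if λ ≥ σ_m²/σ_w², at A* = 0 with minimum σ_m² + b²; if 0 < λ < σ_m²/σ_w², at (A*)² = sqrt(σ_w²/(λσ_m²)) − σ_w²/σ_m² with minimum 2√(λσ_m²σ_w²) + b² − λσ_w². -/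
open MeasureTheory ProbabilityTheory
open scoped NNReal

/-!
Write `y' = A m + w` and `k = A σm² / (A² σm² + σw²)`. The error `m - k y'` is jointly Gaussian
with `y'` and uncorrelated with it, hence independent of `y = y' + C`, so `E[m | y] = k y'` and the
cost reduces to second moments of linear combinations of `m` and `w`. In `s = A² σm² + σw² ≥ σw²`
the `A`-dependent cost is `σm² σw² / s + λ s - λ σw²`; by AM-GM it is at least
`2 √(λ σm² σw²) - λ σw²`, with equality at `s² = σm² σw² / λ`, which is admissible iff
`λ < σm² / σw²`; otherwise the cost increases on `s ≥ σw²` and the minimum is at `A = 0`.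
-/

namespace ProbabilityTheory

lemma integral_sq_gaussianReal_zero (v : ℝ≥0) : ∫ x, x ^ 2 ∂gaussianReal 0 v = v := by
  rw [← variance_fun_id_gaussianReal (μ := 0),
    variance_of_integral_eq_zero aemeasurable_id' integral_id_gaussianReal]

variable {Ω : Type*} [MeasurableSpace Ω] {μ : Measure Ω} {m w : Ω → ℝ}

lemma HasGaussianLaw.linearCombination_prodMk {X Y : Ω → ℝ}
    (hXY : HasGaussianLaw (fun ω => (X ω, Y ω)) μ) (a b c d : ℝ) :
    HasGaussianLaw (fun ω => (a * X ω + b * Y ω, c * X ω + d * Y ω)) μ := by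
  simpa using hXY.map_fun
    ((a • ContinuousLinearMap.fst ℝ ℝ ℝ + b • ContinuousLinearMap.snd ℝ ℝ ℝ).prod
      (c • ContinuousLinearMap.fst ℝ ℝ ℝ + d • ContinuousLinearMap.snd ℝ ℝ ℝ))

lemma integral_affine_mul_affine [IsProbabilityMeasure μ] (hm : MemLp m 2 μ) (hw : MemLp w 2 μ)
    (hm0 : μ[m] = 0) (hw0 : μ[w] = 0) (hind : IndepFun m w μ) (a c d a' c' d' : ℝ) :
    ∫ ω, (a * m ω + c * w ω + d) * (a' * m ω + c' * w ω + d') ∂μ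
      = a * a' * ∫ ω, m ω ^ 2 ∂μ + c * c' * ∫ ω, w ω ^ 2 ∂μ + d * d' := by
  have hm1 := hm.integrable one_le_two
  have hw1 := hw.integrable one_le_two
  have hm2 := hm.integrable_sq
  have hw2 := hw.integrable_sq
  have hmw : Integrable (fun ω => m ω * w ω) μ := hind.integrable_mul hm1 hw1
  have hmw0 : ∫ ω, m ω * w ω ∂μ = 0 := by
    rw [hind.integral_fun_mul_eq_mul_integral hm1.aestronglyMeasurable hw1.aestronglyMeasurable,
      hm0, zero_mul]
  have expand : ∀ ω, (a * m ω + c * w ω + d) * (a' * m ω + c' * w ω + d')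
      = (a * a') * m ω ^ 2 + (c * c') * w ω ^ 2 + (a * c' + c * a') * (m ω * w ω)
        + (a * d' + d * a') * m ω + (c * d' + d * c') * w ω + d * d' := fun ω => by ring
  simp_rw [expand]
  rw [integral_add, integral_add, integral_add, integral_add, integral_add]
  all_goals try fun_prop
  simp [integral_const_mul, hm0, hw0, hmw0]

lemma condExp_add_comp_of_indepFun [IsProbabilityMeasure μ] {Z Y : Ω → ℝ} {g : ℝ → ℝ}
    (hZ : Measurable Z) (hY : Measurable Y) (hg : Measurable g) (hZi : Integrable Z μ)
    (hgY : Integrable (fun ω => g (Y ω)) μ) (hind : IndepFun Z Y μ) :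
    μ[fun ω => Z ω + g (Y ω) | MeasurableSpace.comap Y inferInstance]
      =ᵐ[μ] fun ω => μ[Z] + g (Y ω) := by
  have hgY_sm : StronglyMeasurable[MeasurableSpace.comap Y inferInstance] fun ω => g (Y ω) :=
    (hg.comp (comap_measurable Y)).stronglyMeasurable
  calc μ[fun ω => Z ω + g (Y ω) | MeasurableSpace.comap Y inferInstance]
      =ᵐ[μ] μ[Z | MeasurableSpace.comap Y inferInstance]
        + μ[fun ω => g (Y ω) | MeasurableSpace.comap Y inferInstance] := condExp_add hZi hgY _
    _ =ᵐ[μ] (fun _ => μ[Z]) + fun ω => g (Y ω) := by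
      refine .add (condExp_indep_eq hZ.comap_le hY.comap_le
        (comap_measurable Z).stronglyMeasurable hind) ?_
      rw [condExp_of_stronglyMeasurable hY.comap_le hgY_sm hgY]

variable {vm vw : ℝ≥0}

lemma HasLaw.integral_eq_zero_of_gaussianReal (hm : HasLaw m (gaussianReal 0 vm) μ) :
    μ[m] = 0 := by
  rw [hm.integral_eq, integral_id_gaussianReal]

lemma HasLaw.integral_sq_of_gaussianReal (hm : HasLaw m (gaussianReal 0 vm) μ) :
    ∫ ω, m ω ^ 2 ∂μ = vm := by
  rw [← integral_sq_gaussianReal_zero vm,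
    ← hm.integral_comp (f := fun x : ℝ => x ^ 2) (by fun_prop)]
  rfl

section GaussianChannel

variable [IsProbabilityMeasure μ] (hm : HasLaw m (gaussianReal 0 vm) μ)
  (hw : HasLaw w (gaussianReal 0 vw) μ) (hind : IndepFun m w μ)
include hm hw hind

lemma integral_affine_mul_affine_of_gaussianReal (a c d a' c' d' : ℝ) :
    ∫ ω, (a * m ω + c * w ω + d) * (a' * m ω + c' * w ω + d') ∂μ
      = a * a' * vm + c * c' * vw + d * d' := by
  rw [integral_affine_mul_affine hm.hasGaussianLaw.memLp_two hw.hasGaussianLaw.memLp_two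
    hm.integral_eq_zero_of_gaussianReal hw.integral_eq_zero_of_gaussianReal hind,
    hm.integral_sq_of_gaussianReal, hw.integral_sq_of_gaussianReal]

lemma indepFun_sub_mmse_of_gaussianReal (hvw : vw ≠ 0) (A : ℝ) :
    IndepFun (fun ω => m ω - A * vm / (A ^ 2 * vm + vw) * (A * m ω + w ω))
      (fun ω => A * m ω + w ω) μ := by
  set k := A * vm / (A ^ 2 * vm + vw)
  have hk : k * (A ^ 2 * vm + vw) = A * vm := div_mul_cancel₀ _ (by positivity)
  have hpair := (IndepFun.hasGaussianLaw hm.hasGaussianLaw hw.hasGaussianLaw hind)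
    |>.linearCombination_prodMk (1 - k * A) (-k) A 1
  refine (hpair.congr (ae_of_all _ fun ω => ?_)).indepFun_of_covariance_eq_zero ?_
  · ext <;> simp only <;> ring
  have hmoment := integral_affine_mul_affine_of_gaussianReal hm hw hind
  have hZ0 : ∫ ω, m ω - k * (A * m ω + w ω) ∂μ = 0 := by
    convert hmoment (1 - k * A) (-k) 0 0 0 1 using 3 with ω <;> ring
  have hY0 : ∫ ω, A * m ω + w ω ∂μ = 0 := by
    convert hmoment A 1 0 0 0 1 using 3 with ω <;> ring
  rw [covariance, hZ0, hY0]
  convert hmoment (1 - k * A) (-k) 0 A 1 0 using 3 with ω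
  · ring
  · linear_combination hk

lemma condExp_of_gaussianChannel (hmm : Measurable m) (hwm : Measurable w) (hvw : vw ≠ 0)
    (A C : ℝ) :
    μ[m | MeasurableSpace.comap (fun ω => A * m ω + C + w ω) Real.measurableSpace]
      =ᵐ[μ] fun ω => A * vm / (A ^ 2 * vm + vw) * (A * m ω + w ω) := by
  set k := A * vm / (A ^ 2 * vm + vw)
  set y := fun ω => A * m ω + C + w ω
  have hindZy : IndepFun (fun ω => m ω - k * (A * m ω + w ω)) y μ := by
    refine ((indepFun_sub_mmse_of_gaussianReal hm hw hind hvw A).comp measurable_id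
      (measurable_add_const C)).congr (ae_of_all _ fun _ => rfl) (ae_of_all _ fun ω => ?_)
    simp only [y, Function.comp_apply]
    ring
  have hm1 := hm.hasGaussianLaw.integrable
  have hw1 := hw.hasGaussianLaw.integrable
  have hZ0 : μ[fun ω => m ω - k * (A * m ω + w ω)] = 0 := by
    convert integral_affine_mul_affine_of_gaussianReal hm hw hind (1 - k * A) (-k) 0 0 0 1
      using 3 with ω <;> ring
  have hdecomp : m = fun ω => (m ω - k * (A * m ω + w ω)) + k * (y ω - C) := by
    ext ω
    simp only [y]
    ring
  have hcond := condExp_add_comp_of_indepFun (g := fun t => k * (t - C)) (by fun_prop)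
    (by fun_prop) (by fun_prop) (by fun_prop) (by fun_prop) hindZy
  rw [← hdecomp, hZ0] at hcond
  refine hcond.trans (ae_of_all _ fun ω => ?_)
  simp only [y]
  ring

lemma integral_encoderCost_of_gaussianChannel (hmm : Measurable m) (hwm : Measurable w)
    (hvw : vw ≠ 0) (l b A C : ℝ) :
    ∫ ω, ((m ω - (μ[m | MeasurableSpace.comap (fun ω' => A * m ω' + C + w ω')
        Real.measurableSpace]) ω - b) ^ 2 + l * (A * m ω + C) ^ 2) ∂μ
      = vm * vw / (A ^ 2 * vm + vw) + b ^ 2 + l * A ^ 2 * vm + l * C ^ 2 := by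
  set k := A * vm / (A ^ 2 * vm + vw)
  have hm2 := hm.hasGaussianLaw.memLp_two
  have hw2 := hw.hasGaussianLaw.memLp_two
  have hsq : ∀ a c d : ℝ, Integrable (fun ω => (a * m ω + c * w ω + d) ^ 2) μ :=
    fun a c d => (((hm2.const_mul a).add (hw2.const_mul c)).add (memLp_const d)).integrable_sq
  have hmoment := integral_affine_mul_affine_of_gaussianReal hm hw hind
  calc _ = ∫ ω, (((1 - k * A) * m ω + (-k) * w ω + (-b)) ^ 2
        + l * (A * m ω + 0 * w ω + C) ^ 2) ∂μ :=
        integral_congr_ae <| (condExp_of_gaussianChannel hm hw hind hmm hwm hvw A C).mono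
          fun ω h => by rw [h]; ring
    _ = ∫ ω, ((1 - k * A) * m ω + (-k) * w ω + (-b)) ^ 2 ∂μ
        + l * ∫ ω, (A * m ω + 0 * w ω + C) ^ 2 ∂μ := by
      rw [integral_add (hsq _ _ _) ((hsq _ _ _).const_mul l), integral_const_mul]
    _ = _ := by
      have hD : (A ^ 2 * vm + vw : ℝ) ≠ 0 := by positivity
      simp only [sq, hmoment, k]
      field_simp
      ring

end GaussianChannel

end ProbabilityTheory

/-- `signalingCost σm² σw² λ A = J(A, 0) - b²`. -/
noncomputable def signalingCost (p q l A : ℝ) : ℝ := p * q / (A ^ 2 * p + q) + l * A ^ 2 * p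

section SignalingCost

variable {p q l : ℝ}

lemma signalingCost_zero (hq : q ≠ 0) : signalingCost p q l 0 = p := by
  simp [signalingCost, hq]

lemma signalingCost_zero_le (hp : 0 ≤ p) (hq : 0 < q) (hl : p / q ≤ l) (A : ℝ) :
    signalingCost p q l 0 ≤ signalingCost p q l A := by
  have hs : 0 < A ^ 2 * p + q := by positivity
  have hlq : p ≤ l * q := (div_le_iff₀ hq).mp hl
  rw [signalingCost_zero hq.ne', signalingCost, div_add' _ _ _ hs.ne', le_div_iff₀ hs]
  nlinarith [mul_nonneg (mul_nonneg (sq_nonneg A) hp) (sub_nonneg.mpr hlq),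
    mul_nonneg (mul_nonneg (sq_nonneg A) hp)
      (mul_nonneg (mul_nonneg (sq_nonneg A) hp) (hp.trans hlq))]

lemma two_sqrt_sub_le_signalingCost (hp : 0 ≤ p) (hq : 0 < q) (hl : 0 < l) (A : ℝ) :
    2 * √(l * p * q) - l * q ≤ signalingCost p q l A := by
  set s := A ^ 2 * p + q
  have hs : 0 < s := by positivity
  have hsq : √(l * p * q) ^ 2 = l * p * q := Real.sq_sqrt (by positivity)
  have hamgm : 2 * √(l * p * q) ≤ p * q / s + l * s := by
    rw [div_add' _ _ _ hs.ne', le_div_iff₀ hs]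
    nlinarith [sq_nonneg (√(l * p * q) - l * s)]
  have hcost : signalingCost p q l A = p * q / s + l * s - l * q := by
    simp only [signalingCost, s]; ring
  linarith

lemma div_le_sqrt_div (hp : 0 < p) (hq : 0 < q) (hl : 0 < l) (hlt : l < p / q) :
    q / p ≤ √(q / (l * p)) := by
  rw [Real.le_sqrt (by positivity) (by positivity), div_pow,
    div_le_div_iff₀ (by positivity) (by positivity)]
  have hlq : l * q < p := (lt_div_iff₀ hq).mp hlt
  nlinarith [mul_pos hp hq]

lemma signalingCost_of_sq_eq (hp : 0 < p) (hq : 0 < q) (hl : 0 < l) {A : ℝ}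
    (hA : A ^ 2 = √(q / (l * p)) - q / p) :
    signalingCost p q l A = 2 * √(l * p * q) - l * q := by
  set r := √(q / (l * p))
  have hr : 0 < r := Real.sqrt_pos.mpr (by positivity)
  have hr2 : l * p * r ^ 2 = q := by
    rw [Real.sq_sqrt (by positivity)]; field_simp
  have hlpr : l * p * r = √(l * p * q) := by
    rw [← Real.sqrt_sq (by positivity : 0 ≤ l * p * r)]
    congr 1
    linear_combination l * p * hr2
  have hs : A ^ 2 * p + q = p * r := by
    rw [hA]; field_simp; ring
  rw [signalingCost, hs, hA, ← hlpr]
  field_simp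
  linear_combination -hr2

end SignalingCost

theorem stmt_14 {Ω : Type*} [MeasurableSpace Ω] (μ : Measure Ω)
    [IsProbabilityMeasure μ]
    (σm2 σw2 : ℝ≥0) (hm : 0 < σm2) (hw : 0 < σw2)
    (m w : Ω → ℝ) (hmm : Measurable m) (hwm : Measurable w)
    (hmg : μ.map m = gaussianReal 0 σm2)
    (hwg : μ.map w = gaussianReal 0 σw2)
    (hind : IndepFun m w μ)
    (l b : ℝ) (hl : 0 < l)
    (J : ℝ → ℝ → ℝ)
    (hJ : ∀ A C, J A C =
      ∫ ω, ((m ω - (μ[m | MeasurableSpace.comap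
            (fun ω' => A * m ω' + C + w ω') Real.measurableSpace]) ω - b) ^ 2
          + l * (A * m ω + C) ^ 2) ∂μ)
    (f : ℝ → ℝ → ℝ)
    (hf : ∀ A C, f A C = (σm2 : ℝ) * (σw2 : ℝ) / (A ^ 2 * (σm2 : ℝ) + (σw2 : ℝ))
      + b ^ 2 + l * A ^ 2 * (σm2 : ℝ) + l * C ^ 2) :
    (∀ A C, J A C = f A C) ∧
    (∀ A C, f A C ≥ f A 0) ∧
    (l ≥ (σm2 : ℝ) / (σw2 : ℝ) →
      (∀ A, f A 0 ≥ f 0 0) ∧ f 0 0 = (σm2 : ℝ) + b ^ 2) ∧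
    (l < (σm2 : ℝ) / (σw2 : ℝ) →
      ∃ Astar : ℝ,
        Astar ^ 2 = Real.sqrt ((σw2 : ℝ) / (l * (σm2 : ℝ))) - (σw2 : ℝ) / (σm2 : ℝ) ∧
        (∀ A, f A 0 ≥ f Astar 0) ∧
        f Astar 0 = 2 * Real.sqrt (l * (σm2 : ℝ) * (σw2 : ℝ)) + b ^ 2
          - l * (σw2 : ℝ)) := by
  have hmL : HasLaw m (gaussianReal 0 σm2) μ := ⟨hmm.aemeasurable, hmg⟩
  have hwL : HasLaw w (gaussianReal 0 σw2) μ := ⟨hwm.aemeasurable, hwg⟩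
  have hm' : (0 : ℝ) < σm2 := hm
  have hw' : (0 : ℝ) < σw2 := hw
  have hfA : ∀ A, f A 0 = signalingCost σm2 σw2 l A + b ^ 2 := fun A => by
    rw [hf, signalingCost]; ring
  refine ⟨fun A C => ?_, fun A C => ?_, fun hlge => ⟨fun A => ?_, ?_⟩, fun hlt => ?_⟩
  · rw [hJ, hf, integral_encoderCost_of_gaussianChannel hmL hwL hind hmm hwm hw.ne' l b A C]
  · rw [hf, hf]
    nlinarith [mul_nonneg hl.le (sq_nonneg C)]
  · rw [hfA, hfA]
    linarith [signalingCost_zero_le hm'.le hw' hlge A]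
  · rw [hfA, signalingCost_zero hw'.ne']
  · have hA := Real.sq_sqrt (sub_nonneg.mpr (div_le_sqrt_div hm' hw' hl hlt))
    refine ⟨_, hA, fun A => ?_, ?_⟩
    · rw [hfA, hfA, signalingCost_of_sq_eq hm' hw' hl hA]
      linarith [two_sqrt_sub_le_signalingCost hm'.le hw' hl A]
    · rw [hfA, signalingCost_of_sq_eq hm' hw' hl hA]
      ring
end
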